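/- arXiv:2305.18412 — 4 statements merged into one kernel-verified Lean document; each statement's English description precedes it below -/
import Mathlib

section
/- Let X and Y be bounded real random variables with means μ_x and μ_y, where |X - μ_x| ≤ r and |Y - μ_y| ≤ r almost surely, and suppose Y ≥ c > 0 almost surely with μ_y ≥ c. Then |E[X/Y] - (μ_x/μ_y + Var(Y)μ_x/μ_y³ - Cov(X,Y)/μ_y²)| ≤ C·r³ for an explicit constant C depending only on c and a bound on |μ_x|. -/
/-!
For `y ≠ 0`, `x / y` is exactly its second-order Taylor polynomial at `(m, n)` plus the remainder
`(y - n)² ((x - m) n - m (y - n)) / (n³ y)`, which is cubic in the deviations `x - m`, `y - n`.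
Taking expectations with `m = E[X]`, `n = E[Y]` kills the linear terms, the quadratic terms give the
variance and covariance corrections, and since `Y ≥ c` and `E[Y] ≥ c` the remainder is bounded
pointwise by `(c + M) r³ / c⁴`.
-/

open MeasureTheory

noncomputable def ratioTaylorPoly (m n x y : ℝ) : ℝ :=
  m / n + (x - m) / n - m * (y - n) / n ^ 2 - (x - m) * (y - n) / n ^ 2 + m * (y - n) ^ 2 / n ^ 3

noncomputable def ratioTaylorRemainder (m n x y : ℝ) : ℝ :=
  (y - n) ^ 2 * ((x - m) * n - m * (y - n)) / (n ^ 3 * y)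

theorem div_eq_ratioTaylorPoly_add_remainder {m n x y : ℝ} (hn : n ≠ 0) (hy : y ≠ 0) :
    x / y = ratioTaylorPoly m n x y + ratioTaylorRemainder m n x y := by
  unfold ratioTaylorPoly ratioTaylorRemainder
  field_simp
  ring

theorem abs_ratioTaylorRemainder_le {c M r m n x y : ℝ} (hc : 0 < c) (hcn : c ≤ n) (hcy : c ≤ y)
    (hm : |m| ≤ M) (hx : |x - m| ≤ r) (hy : |y - n| ≤ r) :
    |ratioTaylorRemainder m n x y| ≤ (c + M) / c ^ 4 * r ^ 3 := by
  have hn : 0 < n := hc.trans_le hcn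
  have hy0 : 0 < y := hc.trans_le hcy
  have hM : 0 ≤ M := (abs_nonneg m).trans hm
  have hr : 0 ≤ r := (abs_nonneg _).trans hx
  have hnum : |(x - m) * n - m * (y - n)| ≤ (n + M) * r :=
    calc _ ≤ |x - m| * n + |m| * |y - n| := by
          simpa only [abs_mul, abs_of_pos hn] using abs_sub ((x - m) * n) (m * (y - n))
      _ ≤ r * n + M * r := by gcongr
      _ = (n + M) * r := by ring
  calc |ratioTaylorRemainder m n x y|
      = |y - n| ^ 2 * |(x - m) * n - m * (y - n)| / (n ^ 3 * y) := by
        rw [ratioTaylorRemainder, abs_div, abs_mul, abs_pow,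
          abs_of_pos (by positivity : 0 < n ^ 3 * y)]
    _ ≤ r ^ 2 * ((n + M) * r) / (n ^ 3 * c) := by gcongr
    _ = (1 / (n ^ 2 * c) + M / (n ^ 3 * c)) * r ^ 3 := by field_simp
    _ ≤ (1 / (c ^ 2 * c) + M / (c ^ 3 * c)) * r ^ 3 := by gcongr
    _ = (c + M) / c ^ 4 * r ^ 3 := by field_simp

section Expectation

variable {Ω : Type*} [MeasurableSpace Ω] {P : Measure Ω}

theorem memLp_of_ae_abs_sub_le [IsFiniteMeasure P] {X : Ω → ℝ} {m r : ℝ} {p : ENNReal}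
    (hX : AEStronglyMeasurable X P) (h : ∀ᵐ ω ∂P, |X ω - m| ≤ r) : MemLp X p P := by
  simpa using (MemLp.of_bound (hX.sub aestronglyMeasurable_const) r h).add (memLp_const m)

theorem integrable_ratioTaylorPoly [IsFiniteMeasure P] {X Y : Ω → ℝ} (hX : MemLp X 2 P)
    (hY : MemLp Y 2 P) (m n : ℝ) : Integrable (fun ω => ratioTaylorPoly m n (X ω) (Y ω)) P := by
  have hX1 : Integrable X P := hX.integrable one_le_two
  have hY1 : Integrable Y P := hY.integrable one_le_two
  have hXY : Integrable (fun ω => (X ω - m) * (Y ω - n)) P :=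
    (hX.sub (memLp_const m)).integrable_mul (hY.sub (memLp_const n))
  have hYY : Integrable (fun ω => (Y ω - n) ^ 2) P := (hY.sub (memLp_const n)).integrable_sq
  unfold ratioTaylorPoly
  fun_prop

theorem integral_ratioTaylorPoly [IsProbabilityMeasure P] {X Y : Ω → ℝ} {m n : ℝ}
    (hX : MemLp X 2 P) (hY : MemLp Y 2 P) (hm : ∫ ω, X ω ∂P = m) (hn : ∫ ω, Y ω ∂P = n) :
    ∫ ω, ratioTaylorPoly m n (X ω) (Y ω) ∂P =
      m / n + (∫ ω, (Y ω - n) ^ 2 ∂P) * m / n ^ 3 - (∫ ω, (X ω - m) * (Y ω - n) ∂P) / n ^ 2 := by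
  have hX1 : Integrable X P := hX.integrable one_le_two
  have hY1 : Integrable Y P := hY.integrable one_le_two
  have hXY : Integrable (fun ω => (X ω - m) * (Y ω - n)) P :=
    (hX.sub (memLp_const m)).integrable_mul (hY.sub (memLp_const n))
  have hYY : Integrable (fun ω => (Y ω - n) ^ 2) P := (hY.sub (memLp_const n)).integrable_sq
  have hXc : ∫ ω, (X ω - m) ∂P = 0 := by simp [integral_sub hX1 (integrable_const m), hm]
  have hYc : ∫ ω, (Y ω - n) ∂P = 0 := by simp [integral_sub hY1 (integrable_const n), hn]
  unfold ratioTaylorPoly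
  rw [integral_add, integral_sub, integral_sub, integral_add]
  · simp only [integral_div, integral_const_mul, integral_const, probReal_univ, one_smul, hXc, hYc]
    ring
  all_goals fun_prop

end Expectation

theorem ratio_expectation_taylor_bound (c M : ℝ) (hc : 0 < c) (hM : 0 < M) :
    ∃ C : ℝ, 0 < C ∧
      ∀ (Ω : Type) [MeasurableSpace Ω] (P : Measure Ω) [IsProbabilityMeasure P]
        (X Y : Ω → ℝ) (r μx μy : ℝ),
        Measurable X → Measurable Y → 0 ≤ r →
        μx = ∫ ω, X ω ∂P → μy = ∫ ω, Y ω ∂P →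
        (∀ᵐ ω ∂P, |X ω - μx| ≤ r) → (∀ᵐ ω ∂P, |Y ω - μy| ≤ r) →
        (∀ᵐ ω ∂P, c ≤ Y ω) → c ≤ μy → |μx| ≤ M →
        |(∫ ω, X ω / Y ω ∂P) -
            (μx / μy + (∫ ω, (Y ω - μy) ^ 2 ∂P) * μx / μy ^ 3 -
              (∫ ω, (X ω - μx) * (Y ω - μy) ∂P) / μy ^ 2)| ≤ C * r ^ 3 := by
  refine ⟨(c + M) / c ^ 4, by positivity, ?_⟩
  intro Ω _ P _ X Y r μx μy hX hY _ hμx hμy hXr hYr hYc hcμy hμxM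
  have hR : ∀ᵐ ω ∂P, ‖ratioTaylorRemainder μx μy (X ω) (Y ω)‖ ≤ (c + M) / c ^ 4 * r ^ 3 := by
    filter_upwards [hXr, hYr, hYc] with ω hx hy hcy
    exact abs_ratioTaylorRemainder_le hc hcμy hcy hμxM hx hy
  have hIR : Integrable (fun ω => ratioTaylorRemainder μx μy (X ω) (Y ω)) P :=
    .of_bound (by unfold ratioTaylorRemainder; fun_prop : Measurable _).aestronglyMeasurable _ hR
  have hX2 : MemLp X 2 P := memLp_of_ae_abs_sub_le hX.aestronglyMeasurable hXr
  have hY2 : MemLp Y 2 P := memLp_of_ae_abs_sub_le hY.aestronglyMeasurable hYr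
  have hsplit : ∫ ω, X ω / Y ω ∂P = ∫ ω, ratioTaylorPoly μx μy (X ω) (Y ω) ∂P
      + ∫ ω, ratioTaylorRemainder μx μy (X ω) (Y ω) ∂P := by
    rw [← integral_add (integrable_ratioTaylorPoly hX2 hY2 μx μy) hIR]
    refine integral_congr_ae ?_
    filter_upwards [hYc] with ω hcy
    exact div_eq_ratioTaylorPoly_add_remainder (hc.trans_le hcμy).ne' (hc.trans_le hcy).ne'
  rw [hsplit, integral_ratioTaylorPoly hX2 hY2 hμx.symm hμy.symm, add_sub_cancel_left]
  simpa using norm_integral_le_of_norm_le_const hR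
end

section
/- The derivative identity for B-splines: d/dx B_{i,p}(x) = p/(t_{i+p} - t_i) · B_{i,p-1}(x) - p/(t_{i+p+1} - t_{i+1}) · B_{i+1,p-1}(x), valid at all points where the pieces are differentiable. -/
/-- Cox–de Boor recursion for B-spline basis functions on a knot sequence `t : ℤ → ℝ`.
Terms with vanishing denominator are interpreted as zero. -/
noncomputable def Bspline (t : ℤ → ℝ) : ℕ → ℤ → ℝ → ℝ
  | 0, i, x => if t i ≤ x ∧ x < t (i + 1) then 1 else 0
  | p + 1, i, x =>
      (if t (i + (p : ℤ) + 1) = t i then 0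
        else (x - t i) / (t (i + (p : ℤ) + 1) - t i) * Bspline t p i x) +
      (if t (i + (p : ℤ) + 2) = t (i + 1) then 0
        else (t (i + (p : ℤ) + 2) - x) / (t (i + (p : ℤ) + 2) - t (i + 1)) *
          Bspline t p (i + 1) x)

/-!
Induction on the degree. Away from the knots `Bspline t 0 i` is locally constant, so
differentiating the Cox–de Boor recursion by the product rule expresses the derivative in degree
`p + 1` through the degree-`p` splines and their derivatives; inserting the induction hypothesis
and the recursion once more gives the claimed formula. Since `c / 0 = 0` in Lean, the convention
that terms with vanishing denominator are zero is automatic, and monotonicity of the knots is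
needed only to know that the denominators next to a nonzero `Bspline t p (i + 1) x` are nonzero.
-/

open Filter Topology

theorem ite_zero_div_sub_mul (a b c d : ℝ) :
    (if a = b then 0 else c / (a - b) * d) = c / (a - b) * d := by
  split_ifs with h <;> simp [h]

theorem eventually_le_iff_of_ne {α : Type*} [LinearOrder α] [TopologicalSpace α]
    [OrderTopology α] {a x : α} (h : a ≠ x) : ∀ᶠ y in 𝓝 x, (a ≤ y ↔ a ≤ x) := by
  rcases h.lt_or_gt with h | h
  · filter_upwards [lt_mem_nhds h] with y hy
    simp [hy.le, h.le]
  · filter_upwards [gt_mem_nhds h] with y hy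
    simp [not_le.2 hy, not_le.2 h]

theorem eventually_lt_iff_of_ne {α : Type*} [LinearOrder α] [TopologicalSpace α]
    [OrderTopology α] {b x : α} (h : b ≠ x) : ∀ᶠ y in 𝓝 x, (y < b ↔ x < b) := by
  filter_upwards [eventually_le_iff_of_ne h] with y hy
  simpa only [not_le] using hy.not

namespace Bspline

theorem succ_eq (t : ℤ → ℝ) (p : ℕ) (i : ℤ) (x : ℝ) :
    Bspline t (p + 1) i x = (x - t i) / (t (i + p + 1) - t i) * Bspline t p i x +
      (t (i + p + 2) - x) / (t (i + p + 2) - t (i + 1)) * Bspline t p (i + 1) x := by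
  rw [Bspline, ite_zero_div_sub_mul, ite_zero_div_sub_mul]

theorem mem_Ico_of_ne_zero {t : ℤ → ℝ} (ht : Monotone t) {p : ℕ} {i : ℤ} {x : ℝ}
    (h : Bspline t p i x ≠ 0) : x ∈ Set.Ico (t i) (t (i + p + 1)) := by
  induction p generalizing i with
  | zero =>
    rw [Bspline, ne_eq, ite_eq_right_iff, Classical.not_imp] at h
    simpa using h.1
  | succ p ih =>
    rw [succ_eq] at h
    rcases (show Bspline t p i x ≠ 0 ∨ Bspline t p (i + 1) x ≠ 0 by
      contrapose! h; simp [h]) with hB | hB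
    · obtain ⟨h₁, h₂⟩ := ih hB
      exact ⟨h₁, h₂.trans_le (ht (by push_cast; omega))⟩
    · obtain ⟨h₁, h₂⟩ := ih hB
      refine ⟨(ht (by omega)).trans h₁, ?_⟩
      convert h₂ using 2
      push_cast; ring

theorem zero_eventuallyEq {t : ℤ → ℝ} {i : ℤ} {x : ℝ} (hi : x ≠ t i) (hi₁ : x ≠ t (i + 1)) :
    Bspline t 0 i =ᶠ[𝓝 x] fun _ => Bspline t 0 i x := by
  filter_upwards [eventually_le_iff_of_ne hi.symm, eventually_lt_iff_of_ne hi₁.symm]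
    with y h₁ h₂
  simp only [Bspline, h₁, h₂]

end Bspline

noncomputable def BsplineDeriv (t : ℤ → ℝ) : ℕ → ℤ → ℝ → ℝ
  | 0, _, _ => 0
  | p + 1, i, x => ((p : ℝ) + 1) / (t (i + p + 1) - t i) * Bspline t p i x -
      ((p : ℝ) + 1) / (t (i + p + 2) - t (i + 1)) * Bspline t p (i + 1) x

namespace BsplineDeriv

theorem succ_eq {t : ℤ → ℝ} (ht : Monotone t) (p : ℕ) (i : ℤ) (x : ℝ) :
    BsplineDeriv t (p + 1) i x =
      (Bspline t p i x + (x - t i) * BsplineDeriv t p i x) / (t (i + p + 1) - t i) -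
      (Bspline t p (i + 1) x - (t (i + p + 2) - x) * BsplineDeriv t p (i + 1) x) /
        (t (i + p + 2) - t (i + 1)) := by
  cases p with
  | zero =>
    simp only [BsplineDeriv, Nat.cast_zero, add_zero, mul_zero, sub_zero]
    ring
  | succ p =>
    have e₁ : i + 1 + (p : ℤ) + 1 = i + p + 2 := by ring
    have e₂ : i + 1 + (p : ℤ) + 2 = i + p + 3 := by ring
    have e₃ : i + ((p + 1 : ℕ) : ℤ) + 1 = i + p + 2 := by push_cast; ring
    have e₄ : i + ((p + 1 : ℕ) : ℤ) + 2 = i + p + 3 := by push_cast; ring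
    simp only [BsplineDeriv, Bspline.succ_eq, e₁, e₂, e₃, e₄]
    push_cast
    -- The coefficients of `Bspline t p (i + 1) x` on the two sides differ by `a / a - b / b`,
    -- with `a`, `b` the denominators in `hd₁`, `hd₂`.
    by_cases hB : Bspline t p (i + 1) x = 0
    · rw [hB]; ring
    obtain ⟨h₁, h₂⟩ := Bspline.mem_Ico_of_ne_zero ht hB
    rw [e₁] at h₂
    have hd₁ : t (i + p + 2) - t i ≠ 0 :=
      (sub_pos.2 (((ht (by omega)).trans h₁).trans_lt h₂)).ne'
    have hd₂ : t (i + p + 3) - t (i + 1) ≠ 0 :=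
      (sub_pos.2 ((h₁.trans_lt h₂).trans_le (ht (by omega)))).ne'
    field_simp
    ring

end BsplineDeriv

theorem hasDerivAt_Bspline {t : ℤ → ℝ} (ht : Monotone t) {x : ℝ} (hx : ∀ j, x ≠ t j)
    (p : ℕ) (i : ℤ) : HasDerivAt (Bspline t p i) (BsplineDeriv t p i x) x := by
  induction p generalizing i with
  | zero =>
    exact (hasDerivAt_const x _).congr_of_eventuallyEq
      (Bspline.zero_eventuallyEq (hx i) (hx (i + 1)))
  | succ p ih =>
    have hsucc : Bspline t (p + 1) i = fun y => (y - t i) / (t (i + p + 1) - t i) * Bspline t p i y +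
        (t (i + p + 2) - y) / (t (i + p + 2) - t (i + 1)) * Bspline t p (i + 1) y :=
      funext (Bspline.succ_eq t p i)
    rw [hsucc, BsplineDeriv.succ_eq ht]
    have h₁ := (((hasDerivAt_id x).sub_const (t i)).div_const (t (i + p + 1) - t i)).mul (ih i)
    have h₂ := (((hasDerivAt_const x (t (i + p + 2))).sub (hasDerivAt_id x)).div_const
      (t (i + p + 2) - t (i + 1))).mul (ih (i + 1))
    exact (h₁.add h₂).congr_deriv (by simp only [id, Pi.sub_apply]; ring)

/-- Derivative identity for B-splines of degree `p+1` at points that are not knots: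
`d/dx B_{i,p+1}(x) = (p+1)/(t_{i+p+1}-t_i) B_{i,p}(x) - (p+1)/(t_{i+p+2}-t_{i+1}) B_{i+1,p}(x)`,
with terms having vanishing denominator interpreted as zero. -/
theorem Bspline_deriv (t : ℤ → ℝ) (ht : Monotone t) (p : ℕ) (i : ℤ) (x : ℝ)
    (hx : ∀ j : ℤ, x ≠ t j) :
    HasDerivAt (fun y => Bspline t (p + 1) i y)
      ((if t (i + (p : ℤ) + 1) = t i then 0
          else ((p : ℝ) + 1) / (t (i + (p : ℤ) + 1) - t i) * Bspline t p i x) -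
        (if t (i + (p : ℤ) + 2) = t (i + 1) then 0
          else ((p : ℝ) + 1) / (t (i + (p : ℤ) + 2) - t (i + 1)) * Bspline t p (i + 1) x))
      x := by
  rw [ite_zero_div_sub_mul, ite_zero_div_sub_mul]
  exact hasDerivAt_Bspline ht hx (p + 1) i
end

section
/- Convolution of indicator with Gaussian against Gaussian: for the indicator h(u) = 1_{[0,σ_h]}(u) and Gaussian kernel φ_σ, ∫_ℝ (h ∗ φ_{σ_w})(s) · φ_{√2 σ_I}(s) ds = (1/2)·erf(σ_h/√(2σ_w² + 4σ_I²)). -/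
/-!
By Fubini the outer integral can be taken first: `∫ φ_{σw}(s - u) φ_{√2 σI}(s) ds` is a Gaussian
convolution, equal to `φ_σ(u)` with `σ² = σw² + 2σI²` because completing the square in `s` factors
the integrand as `φ_σ(u)` times a Gaussian density in `s`. What remains is `∫_0^{σh} φ_σ`, which the
substitution `u = √2 σ t` turns into `(1/2) erf(σh / (√2 σ))`.
-/

open Real MeasureTheory

/-- Centered Gaussian density with standard deviation `σ`. -/
noncomputable def gaussDens (σ : ℝ) (t : ℝ) : ℝ :=
  (1 / Real.sqrt (2 * Real.pi * σ ^ 2)) * Real.exp (-(t ^ 2) / (2 * σ ^ 2))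

/-- The error function `erf(x) = (2/√π) ∫_0^x e^{-t²} dt`. -/
noncomputable def erf (x : ℝ) : ℝ :=
  (2 / Real.sqrt Real.pi) * ∫ t in (0 : ℝ)..x, Real.exp (-(t ^ 2))

theorem integral_integral_mul_kernel_swap {α β : Type*} [MeasurableSpace α] [MeasurableSpace β]
    {μ : Measure α} {ν : Measure β} [SFinite μ] [SFinite ν] {f : β → ℝ} {g : α → ℝ}
    {K : α → β → ℝ} {C : ℝ} (hf : Integrable f ν) (hg : Integrable g μ)
    (hK : AEStronglyMeasurable (Function.uncurry K) (μ.prod ν)) (hKC : ∀ a b, ‖K a b‖ ≤ C) :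
    ∫ a, (∫ b, f b * K a b ∂ν) * g a ∂μ = ∫ b, f b * ∫ a, K a b * g a ∂μ ∂ν := by
  have hint : Integrable (Function.uncurry fun a b => f b * K a b * g a) (μ.prod ν) := by
    refine ((hg.mul_prod hf).bdd_mul hK (ae_of_all _ fun p => hKC p.1 p.2)).congr
      (ae_of_all _ fun p => ?_)
    simp only [Function.uncurry]
    ring
  calc ∫ a, (∫ b, f b * K a b ∂ν) * g a ∂μ = ∫ a, ∫ b, f b * K a b * g a ∂ν ∂μ := by
        simp_rw [← integral_mul_const]
    _ = ∫ b, ∫ a, f b * K a b * g a ∂μ ∂ν := integral_integral_swap hint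
    _ = ∫ b, f b * ∫ a, K a b * g a ∂μ ∂ν := by simp_rw [mul_assoc, integral_const_mul]

theorem gaussDens_eq_gaussianPDFReal (σ : ℝ) :
    gaussDens σ = ProbabilityTheory.gaussianPDFReal 0 ⟨σ ^ 2, sq_nonneg σ⟩ := by
  ext t
  simp only [gaussDens, ProbabilityTheory.gaussianPDFReal, sub_zero, one_div]
  rfl

theorem measurable_gaussDens (σ : ℝ) : Measurable (gaussDens σ) := by
  rw [gaussDens_eq_gaussianPDFReal]
  exact ProbabilityTheory.measurable_gaussianPDFReal _ _

theorem integrable_gaussDens (σ : ℝ) : Integrable (gaussDens σ) := by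
  rw [gaussDens_eq_gaussianPDFReal]
  exact ProbabilityTheory.integrable_gaussianPDFReal _ _

theorem integral_gaussDens {σ : ℝ} (hσ : σ ≠ 0) : ∫ t, gaussDens σ t = 1 := by
  rw [gaussDens_eq_gaussianPDFReal]
  exact ProbabilityTheory.integral_gaussianPDFReal_eq_one _
    fun h => pow_ne_zero 2 hσ (congrArg Subtype.val h)

theorem norm_gaussDens_le (σ t : ℝ) : ‖gaussDens σ t‖ ≤ 1 / √(2 * π * σ ^ 2) := by
  have hexp : exp (-(t ^ 2) / (2 * σ ^ 2)) ≤ 1 := exp_le_one_iff.2 <| by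
    rw [neg_div]; exact neg_nonpos.2 (by positivity)
  rw [Real.norm_of_nonneg (by unfold gaussDens; positivity), gaussDens]
  exact mul_le_of_le_one_right (by positivity) hexp

theorem gaussDens_sub_mul_gaussDens {σ₁ σ₂ : ℝ} (h₁ : σ₁ ≠ 0) (h₂ : σ₂ ≠ 0) (s u : ℝ) :
    gaussDens σ₁ (s - u) * gaussDens σ₂ s =
      gaussDens √(σ₁ ^ 2 + σ₂ ^ 2) u *
        gaussDens (σ₁ * σ₂ / √(σ₁ ^ 2 + σ₂ ^ 2)) (s - u * σ₂ ^ 2 / (σ₁ ^ 2 + σ₂ ^ 2)) := by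
  have hS : 0 < σ₁ ^ 2 + σ₂ ^ 2 := by positivity
  have hsqrt : √(σ₁ ^ 2 + σ₂ ^ 2) ^ 2 = σ₁ ^ 2 + σ₂ ^ 2 := sq_sqrt hS.le
  have hτ : (σ₁ * σ₂ / √(σ₁ ^ 2 + σ₂ ^ 2)) ^ 2 = σ₁ ^ 2 * σ₂ ^ 2 / (σ₁ ^ 2 + σ₂ ^ 2) := by
    rw [div_pow, mul_pow, hsqrt]
  have hconst : 1 / √(2 * π * σ₁ ^ 2) * (1 / √(2 * π * σ₂ ^ 2)) =
      1 / √(2 * π * (σ₁ ^ 2 + σ₂ ^ 2)) *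
        (1 / √(2 * π * (σ₁ ^ 2 * σ₂ ^ 2 / (σ₁ ^ 2 + σ₂ ^ 2)))) := by
    rw [div_mul_div_comm, div_mul_div_comm, ← sqrt_mul (by positivity),
      ← sqrt_mul (by positivity)]
    congr 2
    field_simp
  have hexp : -((s - u) ^ 2) / (2 * σ₁ ^ 2) + -(s ^ 2) / (2 * σ₂ ^ 2) =
      -(u ^ 2) / (2 * (σ₁ ^ 2 + σ₂ ^ 2)) +
        -((s - u * σ₂ ^ 2 / (σ₁ ^ 2 + σ₂ ^ 2)) ^ 2) /
          (2 * (σ₁ ^ 2 * σ₂ ^ 2 / (σ₁ ^ 2 + σ₂ ^ 2))) := by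
    field_simp
    ring
  simp only [gaussDens, hsqrt, hτ]
  calc _ = 1 / √(2 * π * σ₁ ^ 2) * (1 / √(2 * π * σ₂ ^ 2)) *
        exp (-((s - u) ^ 2) / (2 * σ₁ ^ 2) + -(s ^ 2) / (2 * σ₂ ^ 2)) := by
          rw [exp_add]; ring
    _ = _ := by rw [hconst, hexp, exp_add]; ring

theorem integral_gaussDens_sub_mul_gaussDens {σ₁ σ₂ : ℝ} (h₁ : σ₁ ≠ 0) (h₂ : σ₂ ≠ 0) (u : ℝ) :
    ∫ s, gaussDens σ₁ (s - u) * gaussDens σ₂ s = gaussDens √(σ₁ ^ 2 + σ₂ ^ 2) u := by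
  have hτ : σ₁ * σ₂ / √(σ₁ ^ 2 + σ₂ ^ 2) ≠ 0 := by positivity
  simp_rw [gaussDens_sub_mul_gaussDens h₁ h₂, integral_const_mul,
    integral_sub_right_eq_self (gaussDens _), integral_gaussDens hτ, mul_one]

theorem intervalIntegral_gaussDens {σ : ℝ} (hσ : 0 < σ) (a : ℝ) :
    ∫ u in (0 : ℝ)..a, gaussDens σ u = 1 / 2 * erf (a / (√2 * σ)) := by
  set c := √2 * σ
  have hc : 0 < c := by positivity
  have hdens : gaussDens σ = fun u => 1 / (√π * c) * exp (-((u / c) ^ 2)) := by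
    ext u
    have hc2 : c ^ 2 = 2 * σ ^ 2 := by rw [mul_pow, sq_sqrt zero_le_two]
    rw [gaussDens, div_pow, hc2, neg_div, ← sqrt_sq hc.le, ← sqrt_mul pi_pos.le, hc2]
    ring_nf
  rw [hdens, intervalIntegral.integral_const_mul,
    intervalIntegral.integral_comp_div (fun x => exp (-(x ^ 2))) hc.ne', zero_div, smul_eq_mul,
    erf]
  field_simp

/-- Convolution of the indicator `1_{[0,σ_h]}` with the Gaussian `φ_{σ_w}`, integrated
against the Gaussian `φ_{√2 σ_I}`, equals `(1/2)·erf(σ_h / √(2σ_w² + 4σ_I²))`. -/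
theorem indicator_gauss_convolution_integral (σw σI σh : ℝ)
    (hw : 0 < σw) (hI : 0 < σI) (hh : 0 < σh) :
    (∫ s : ℝ,
        (∫ u : ℝ, (Set.Icc (0 : ℝ) σh).indicator (fun _ => (1 : ℝ)) u *
          gaussDens σw (s - u)) * gaussDens (Real.sqrt 2 * σI) s) =
      (1 / 2) * erf (σh / Real.sqrt (2 * σw ^ 2 + 4 * σI ^ 2)) := by
  set σ := √(σw ^ 2 + (√2 * σI) ^ 2)
  have hσ : √2 * σ = √(2 * σw ^ 2 + 4 * σI ^ 2) := by
    rw [← sqrt_mul zero_le_two, mul_pow, sq_sqrt zero_le_two]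
    ring_nf
  have hind : Integrable ((Set.Icc (0 : ℝ) σh).indicator fun _ => (1 : ℝ)) :=
    (integrable_indicator_iff measurableSet_Icc).2 (integrableOn_const measure_Icc_lt_top.ne)
  have hK : AEStronglyMeasurable (Function.uncurry fun s u => gaussDens σw (s - u))
      (volume.prod volume) :=
    ((measurable_gaussDens σw).comp (measurable_fst.sub measurable_snd)).aestronglyMeasurable
  rw [integral_integral_mul_kernel_swap hind (integrable_gaussDens _) hK
      (fun s u => norm_gaussDens_le σw (s - u))]
  simp_rw [integral_gaussDens_sub_mul_gaussDens hw.ne' (by positivity : √2 * σI ≠ 0),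
    ← Set.indicator_mul_left, one_mul]
  rw [integral_indicator measurableSet_Icc, integral_Icc_eq_integral_Ioc,
    ← intervalIntegral.integral_of_le hh.le, intervalIntegral_gaussDens (by positivity), hσ]
end

section
/- Autocorrelation of an indicator against a Gaussian: for h(u)=1_{[0,σ_h]}(u) and h⁻(u)=h(-u), ∫_ℝ (h ∗ h⁻)(s) · φ_{√2σ_I}(s) ds = σ_h·erf(σ_h/(2σ_I)) - (2σ_I/√π)(1 - exp(-σ_h²/(4σ_I²))). -/
/-!
The autocorrelation of `1_{[0,σ_h]}` at `s` is the length of `[0,σ_h] ∩ [s, s + σ_h]`, i.e.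
the tent `max (σ_h - |s|) 0`. Since the Gaussian is even, its integral against the tent is
`2 ∫₀^{σ_h} (σ_h - s) φ_σ(s) ds`. The part `∫₀^{σ_h} φ_σ` is an `erf` after rescaling by
`√2 σ`, and `s φ_σ(s) = -σ² φ_σ'(s)` integrates in closed form.
-/

open Real MeasureTheory

open Set

theorem integral_indicator_Icc_mul_indicator_Icc_sub (a s : ℝ) :
    ∫ u, (Icc 0 a).indicator (fun _ => (1 : ℝ)) u * (Icc 0 a).indicator (fun _ => (1 : ℝ)) (u - s)
      = max (a - |s|) 0 := by
  have hoverlap : ∀ u, (Icc 0 a).indicator (fun _ => (1 : ℝ)) u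
      * (Icc 0 a).indicator (fun _ => (1 : ℝ)) (u - s)
      = (Icc (max 0 s) (min a (a + s))).indicator 1 u := by
    intro u
    rw [← Icc_inter_Icc, inter_indicator_one]
    simp only [Pi.mul_apply, indicator_apply, mem_Icc, Pi.one_apply, sub_nonneg,
      tsub_le_iff_right]
  simp_rw [hoverlap, integral_indicator_one measurableSet_Icc, measureReal_def, Real.volume_Icc,
    ENNReal.toReal_ofReal']
  congr 1
  rcases le_total s 0 with hs | hs
  · rw [max_eq_left hs, min_eq_right (by linarith), abs_of_nonpos hs]; ring
  · rw [max_eq_right hs, min_eq_left (by linarith), abs_of_nonneg hs]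

theorem integral_tent_mul_of_even {g : ℝ → ℝ} (hg : ∀ s, g (-s) = g s) {a : ℝ} (ha : 0 ≤ a) :
    ∫ s, max (a - |s|) 0 * g s = 2 * ∫ s in 0..a, (a - s) * g s := by
  have hradial : (fun s => max (a - |s|) 0 * g s) = fun s => max (a - |s|) 0 * g |s| := by
    funext s
    rcases abs_choice s with h | h <;> rw [h]
    exact congrArg _ (hg s).symm
  have htent : (fun t => max (a - t) 0 * g t) = (Iic a).indicator (fun t => (a - t) * g t) := by
    funext t
    by_cases ht : t ≤ a
    · rw [indicator_of_mem (mem_Iic.2 ht), max_eq_left (by linarith)]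
    · rw [indicator_of_notMem (mt mem_Iic.1 ht), max_eq_right (by linarith), zero_mul]
  rw [hradial, integral_comp_abs (f := fun t => max (a - t) 0 * g t), htent,
    setIntegral_indicator measurableSet_Iic, Ioi_inter_Iic, intervalIntegral.integral_of_le ha]

theorem continuous_gaussDens (σ : ℝ) : Continuous (gaussDens σ) := by
  unfold gaussDens; fun_prop

theorem gaussDens_neg (σ t : ℝ) : gaussDens σ (-t) = gaussDens σ t := by
  rw [gaussDens, gaussDens, neg_sq]

theorem gaussDens_eq_exp_div {σ : ℝ} (hσ : 0 < σ) (t : ℝ) :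
    gaussDens σ t = exp (-t ^ 2 / (2 * σ ^ 2)) / (√2 * √π * σ) := by
  rw [gaussDens, sqrt_mul (by positivity), sqrt_mul (by positivity), sqrt_sq hσ.le]
  ring

theorem hasDerivAt_gaussDens (σ t : ℝ) :
    HasDerivAt (gaussDens σ) (-(t / σ ^ 2) * gaussDens σ t) t := by
  have hexponent : HasDerivAt (fun x => -(x ^ 2) / (2 * σ ^ 2)) (-(2 * t) / (2 * σ ^ 2)) t := by
    simpa using ((hasDerivAt_pow 2 t).neg).div_const (2 * σ ^ 2)
  exact (hexponent.exp.const_mul (1 / √(2 * π * σ ^ 2))).congr_deriv (by rw [gaussDens]; ring)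

theorem integral_mul_gaussDens {σ : ℝ} (hσ : σ ≠ 0) (x : ℝ) :
    ∫ s in 0..x, s * gaussDens σ s = σ ^ 2 * (gaussDens σ 0 - gaussDens σ x) := by
  have hderiv : ∀ s ∈ uIcc 0 x,
      HasDerivAt (fun s => -σ ^ 2 * gaussDens σ s) (s * gaussDens σ s) s := fun s _ =>
    ((hasDerivAt_gaussDens σ s).const_mul (-σ ^ 2)).congr_deriv (by field_simp)
  rw [intervalIntegral.integral_eq_sub_of_hasDerivAt hderiv
    ((continuous_id.mul (continuous_gaussDens σ)).intervalIntegrable _ _)]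
  ring

theorem integral_gaussDens_s14 {σ : ℝ} (hσ : 0 < σ) (x : ℝ) :
    ∫ s in 0..x, gaussDens σ s = erf (x / (√2 * σ)) / 2 := by
  have hrescale : ∀ s, -s ^ 2 / (2 * σ ^ 2) = -(s / (√2 * σ)) ^ 2 := fun s => by
    rw [div_pow, mul_pow, sq_sqrt zero_le_two]; ring
  simp_rw [gaussDens_eq_exp_div hσ, hrescale, intervalIntegral.integral_div,
    intervalIntegral.integral_comp_div (fun t => exp (-t ^ 2)) (by positivity : √2 * σ ≠ 0), erf]
  field_simp
  simp

theorem integral_sub_mul_gaussDens {σ : ℝ} (hσ : 0 < σ) (a : ℝ) :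
    2 * ∫ s in 0..a, (a - s) * gaussDens σ s
      = a * erf (a / (√2 * σ)) - √2 * σ / √π * (1 - exp (-a ^ 2 / (2 * σ ^ 2))) := by
  have hint : IntervalIntegrable (gaussDens σ) volume 0 a :=
    (continuous_gaussDens σ).intervalIntegrable _ _
  have hint_mul : IntervalIntegrable (fun s => s * gaussDens σ s) volume 0 a :=
    (continuous_id.mul (continuous_gaussDens σ)).intervalIntegrable _ _
  simp_rw [sub_mul]
  rw [intervalIntegral.integral_sub (hint.const_mul a) hint_mul,
    intervalIntegral.integral_const_mul, integral_gaussDens_s14 hσ, integral_mul_gaussDens hσ.ne']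
  simp only [gaussDens_eq_exp_div hσ]
  field_simp
  simp only [zero_pow two_ne_zero, zero_div, neg_zero, exp_zero]
  linear_combination σ * (1 - exp (-(a ^ 2 / (2 * σ ^ 2)))) * mul_self_sqrt zero_le_two

/-- The autocorrelation `(h ∗ h⁻)(s) = ∫ h(u) h(u - s) du` of `h = 1_{[0,σ_h]}`,
integrated against the Gaussian `φ_{√2 σ_I}`, equals
`σ_h·erf(σ_h/(2σ_I)) - (2σ_I/√π)(1 - exp(-σ_h²/(4σ_I²)))`. -/
theorem indicator_autocorrelation_gauss_integral (σI σh : ℝ) (hI : 0 < σI) (hh : 0 < σh) :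
    (∫ s : ℝ,
        (∫ u : ℝ, (Set.Icc (0 : ℝ) σh).indicator (fun _ => (1 : ℝ)) u *
          (Set.Icc (0 : ℝ) σh).indicator (fun _ => (1 : ℝ)) (u - s)) *
        gaussDens (Real.sqrt 2 * σI) s) =
      σh * erf (σh / (2 * σI)) -
        (2 * σI / Real.sqrt Real.pi) * (1 - Real.exp (-(σh ^ 2) / (4 * σI ^ 2))) := by
  have hsqrt : √2 * (√2 * σI) = 2 * σI := by rw [← mul_assoc, mul_self_sqrt zero_le_two]
  simp_rw [integral_indicator_Icc_mul_indicator_Icc_sub,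
    integral_tent_mul_of_even (gaussDens_neg _) hh.le,
    integral_sub_mul_gaussDens (by positivity : 0 < √2 * σI), hsqrt, mul_pow, sq_sqrt zero_le_two]
  ring_nf
end
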